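/- Let R be any real d×d matrix and D = diag(d₁,…,d_d) a real diagonal d×d matrix. For smooth functions φ on ℝ^d define L⁰φ(x) = (1/2)Δφ(x) - (1/2)⟨Dx, ∇φ(x)⟩ and ℛφ(x) = ⟨Rx, ∇φ(x)⟩. Then for every smooth φ and every x ∈ ℝ^d: ℛ(L⁰φ)(x) - L⁰(ℛφ)(x) = -Σ_{j,k} R_{jk} ∂_j∂_k φ(x) + (1/2)⟨(RD - DR)x, ∇φ(x)⟩. -/

import Mathlib

open MeasureTheory Matrix

noncomputable section

/-- The partial derivative `∂_i φ`. -/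
def pd {d : ℕ} (i : Fin d) (φ : (Fin d → ℝ) → ℝ) : (Fin d → ℝ) → ℝ :=
  fun x => fderiv ℝ φ x (Pi.single i 1)

/-- The Laplacian `Δφ = ∑ i ∂_i² φ`. -/
def lap {d : ℕ} (φ : (Fin d → ℝ) → ℝ) (x : Fin d → ℝ) : ℝ :=
  ∑ i, pd i (pd i φ) x

/-- `L⁰φ(x) = (1/2)Δφ(x) - (1/2)⟨Dx, ∇φ(x)⟩` with `D = diag(d₁,…,d_d)`. -/
def Lsym {d : ℕ} (D : Fin d → ℝ) (φ : (Fin d → ℝ) → ℝ) (x : Fin d → ℝ) : ℝ :=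
  (1 / 2) * lap φ x - (1 / 2) * ∑ i, D i * x i * pd i φ x

/-- `ℛφ(x) = ⟨Rx, ∇φ(x)⟩`. -/
def Rop {d : ℕ} (R : Matrix (Fin d) (Fin d) ℝ) (φ : (Fin d → ℝ) → ℝ) (x : Fin d → ℝ) : ℝ :=
  ∑ i, R.mulVec x i * pd i φ x

end

variable {d : ℕ}

lemma contDiff_pd (i : Fin d) {φ : (Fin d → ℝ) → ℝ} (hφ : ContDiff ℝ (⊤ : ℕ∞) φ) :
    ContDiff ℝ (⊤ : ℕ∞) (pd i φ) := by
  have h := hφ.fderiv_right (m := (⊤ : ℕ∞)) (by simp)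
  exact h.clm_apply contDiff_const

lemma pd_comm {φ : (Fin d → ℝ) → ℝ} (hφ : ContDiff ℝ (⊤ : ℕ∞) φ) (i j : Fin d) :
    pd i (pd j φ) = pd j (pd i φ) := by
  funext x
  have h2 : ContDiffAt ℝ 2 φ x := hφ.contDiffAt.of_le (WithTop.coe_le_coe.mpr le_top)
  have hsym : IsSymmSndFDerivAt ℝ φ x := h2.isSymmSndFDerivAt (by simp)
  have hder : ∀ k : Fin d, ∀ y, pd k φ y = fderiv ℝ φ y (Pi.single k 1) := fun _ _ => rfl
  have hdiff : DifferentiableAt ℝ (fderiv ℝ φ) x :=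
    ((hφ.fderiv_right (m := (⊤ : ℕ∞)) (by simp)).differentiable (by simp)) x
  have key : ∀ k m : Fin d, pd k (pd m φ) x =
      fderiv ℝ (fderiv ℝ φ) x (Pi.single k 1) (Pi.single m 1) := by
    intro k m
    show fderiv ℝ (fun y => (fderiv ℝ φ y) (Pi.single m 1)) x (Pi.single k 1) = _
    rw [fderiv_clm_apply hdiff (differentiableAt_const _)]
    simp
  rw [key, key, hsym]

variable {x : Fin d → ℝ}

lemma pd_sum {ι : Type*} (s : Finset ι) (f : ι → (Fin d → ℝ) → ℝ) (i : Fin d)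
    (h : ∀ j ∈ s, DifferentiableAt ℝ (f j) x) :
    pd i (fun y => ∑ j ∈ s, f j y) x = ∑ j ∈ s, pd i (f j) x := by
  unfold pd
  rw [fderiv_fun_sum h]
  simp

lemma pd_mul {f g : (Fin d → ℝ) → ℝ} (i : Fin d) (hf : DifferentiableAt ℝ f x)
    (hg : DifferentiableAt ℝ g x) :
    pd i (fun y => f y * g y) x = pd i f x * g x + f x * pd i g x := by
  unfold pd
  rw [fderiv_fun_mul hf hg]
  simp only [ContinuousLinearMap.add_apply, ContinuousLinearMap.smul_apply, smul_eq_mul]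
  ring

lemma pd_const_mul {f : (Fin d → ℝ) → ℝ} (c : ℝ) (i : Fin d) (hf : DifferentiableAt ℝ f x) :
    pd i (fun y => c * f y) x = c * pd i f x := by
  unfold pd
  rw [fderiv_const_mul hf]
  simp

lemma pd_sub {f g : (Fin d → ℝ) → ℝ} (i : Fin d) (hf : DifferentiableAt ℝ f x)
    (hg : DifferentiableAt ℝ g x) :
    pd i (fun y => f y - g y) x = pd i f x - pd i g x := by
  unfold pd
  rw [fderiv_fun_sub hf hg]
  simp

lemma pd_coord (k m : Fin d) : pd k (fun y : Fin d → ℝ => y m) x = if m = k then 1 else 0 := by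
  unfold pd
  have : (fun y : Fin d → ℝ => y m) = (ContinuousLinearMap.proj m : (Fin d → ℝ) →L[ℝ] ℝ) := rfl
  rw [this, ContinuousLinearMap.fderiv]
  simp [Pi.single_apply]

lemma pd_lin (c : Fin d → ℝ) (k : Fin d) :
    pd k (fun y : Fin d → ℝ => ∑ m, c m * y m) x = c k := by
  rw [pd_sum Finset.univ _ k (fun j _ => by fun_prop)]
  have : ∀ m, pd k (fun y : Fin d → ℝ => c m * y m) x = c m * (if m = k then 1 else 0) := by
    intro m
    rw [pd_const_mul _ _ (by fun_prop), pd_coord]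
  simp [this]

lemma pd_add {f g : (Fin d → ℝ) → ℝ} (i : Fin d) (hf : DifferentiableAt ℝ f x)
    (hg : DifferentiableAt ℝ g x) :
    pd i (fun y => f y + g y) x = pd i f x + pd i g x := by
  unfold pd
  rw [fderiv_fun_add hf hg]
  simp

lemma diff_pd {φ : (Fin d → ℝ) → ℝ} (i : Fin d) (hφ : ContDiff ℝ (⊤ : ℕ∞) φ) :
    DifferentiableAt ℝ (pd i φ) x :=
  ((contDiff_pd i hφ).differentiable (by simp)) x


lemma pd3_comm {φ : (Fin d → ℝ) → ℝ} (hφ : ContDiff ℝ (⊤ : ℕ∞) φ) (k j : Fin d) :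
    pd k (pd j (pd j φ)) = pd j (pd j (pd k φ)) := by
  rw [pd_comm (contDiff_pd j hφ) k j, pd_comm hφ k j]

lemma pd_Rop {φ : (Fin d → ℝ) → ℝ} (hφ : ContDiff ℝ (⊤ : ℕ∞) φ)
    (R : Matrix (Fin d) (Fin d) ℝ) (k : Fin d) (x : Fin d → ℝ) :
    pd k (Rop R φ) x = ∑ j, (R j k * pd j φ x + R.mulVec x j * pd k (pd j φ) x) := by
  have hrop : Rop R φ = fun y => ∑ j, (∑ m, R j m * y m) * pd j φ y := by
    funext y
    simp [Rop, Matrix.mulVec, dotProduct]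
  rw [hrop, pd_sum Finset.univ _ k (fun j _ => by
    exact DifferentiableAt.mul (by fun_prop) (diff_pd j hφ))]
  refine Finset.sum_congr rfl fun j _ => ?_
  rw [pd_mul k (by fun_prop) (diff_pd j hφ), pd_lin]
  simp [Matrix.mulVec, dotProduct]

lemma pd_Lsym {φ : (Fin d → ℝ) → ℝ} (hφ : ContDiff ℝ (⊤ : ℕ∞) φ)
    (D : Fin d → ℝ) (k : Fin d) (x : Fin d → ℝ) :
    pd k (Lsym D φ) x = (1/2) * (∑ j, pd j (pd j (pd k φ)) x)
      - (1/2) * ∑ j, D j * ((if j = k then 1 else 0) * pd j φ x + x j * pd k (pd j φ) x) := by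
  have hl : Lsym D φ = fun y => (1/2) * (∑ j, pd j (pd j φ) y)
      - (1/2) * (∑ j, D j * (y j * pd j φ y)) := by
    funext y
    simp [Lsym, lap, mul_assoc]
  have hd2 : ∀ (j : Fin d) (y : Fin d → ℝ), DifferentiableAt ℝ (pd j (pd j φ)) y :=
    fun j y => diff_pd j (contDiff_pd j hφ)
  have hdm : ∀ (j : Fin d) (y : Fin d → ℝ),
      DifferentiableAt ℝ (fun y : Fin d → ℝ => D j * (y j * pd j φ y)) y := fun j y =>
    DifferentiableAt.const_mul (DifferentiableAt.mul (by fun_prop) (diff_pd j hφ)) _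
  rw [hl, pd_sub k (by exact DifferentiableAt.const_mul (DifferentiableAt.fun_sum
      (fun j _ => hd2 j x)) _)
    (by exact DifferentiableAt.const_mul (DifferentiableAt.fun_sum (fun j _ => hdm j x)) _),
    pd_const_mul _ _ (DifferentiableAt.fun_sum (fun j _ => hd2 j x)),
    pd_const_mul _ _ (DifferentiableAt.fun_sum (fun j _ => hdm j x)),
    pd_sum Finset.univ _ k (fun j _ => hd2 j x),
    pd_sum Finset.univ _ k (fun j _ => hdm j x)]
  congr 1
  · congr 1
    exact Finset.sum_congr rfl fun j _ => congrFun (pd3_comm hφ k j) x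
  · congr 1
    refine Finset.sum_congr rfl fun j _ => ?_
    rw [pd_const_mul _ _ (DifferentiableAt.fun_mul (by fun_prop) (diff_pd j hφ)),
      pd_mul k (by fun_prop) (diff_pd j hφ), pd_coord]

lemma pd2_Rop {φ : (Fin d → ℝ) → ℝ} (hφ : ContDiff ℝ (⊤ : ℕ∞) φ)
    (R : Matrix (Fin d) (Fin d) ℝ) (k : Fin d) (x : Fin d → ℝ) :
    pd k (pd k (Rop R φ)) x =
      ∑ j, (2 * (R j k * pd k (pd j φ) x) + R.mulVec x j * pd k (pd k (pd j φ)) x) := by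
  have hfun : pd k (Rop R φ) =
      fun y => ∑ j, (R j k * pd j φ y + (∑ m, R j m * y m) * pd k (pd j φ) y) := by
    funext y
    rw [pd_Rop hφ]
    simp [Matrix.mulVec, dotProduct]
  rw [hfun, pd_sum Finset.univ _ k (fun j _ => by
    exact DifferentiableAt.add (DifferentiableAt.const_mul (diff_pd j hφ) _)
      (DifferentiableAt.mul (by fun_prop) (diff_pd k (contDiff_pd j hφ))))]
  refine Finset.sum_congr rfl fun j _ => ?_
  rw [pd_add k (DifferentiableAt.const_mul (diff_pd j hφ) _)
      (DifferentiableAt.fun_mul (by fun_prop) (diff_pd k (contDiff_pd j hφ))),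
    pd_const_mul _ _ (diff_pd j hφ),
    pd_mul k (by fun_prop) (diff_pd k (contDiff_pd j hφ)), pd_lin]
  simp [Matrix.mulVec, dotProduct]
  ring

lemma key {d : ℕ} (R : Matrix (Fin d) (Fin d) ℝ) (D x P Rx : Fin d → ℝ)
    (H T : Fin d → Fin d → ℝ) (hH : ∀ k j, H k j = H j k) :
    ∑ k, Rx k * ((1/2) * (∑ j, T j k)
        - (1/2) * ∑ j, D j * ((if j = k then (1:ℝ) else 0) * P j + x j * H k j))
      - ((1/2) * ∑ k, ∑ j, (2 * (R j k * H k j) + Rx j * T k j)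
        - (1/2) * ∑ k, D k * x k * (∑ j, (R j k * P j + Rx j * H k j)))
    = -(∑ j, ∑ k, R j k * H j k)
      + (1/2) * ∑ i, ((∑ j, R i j * D j * x j) - D i * Rx i) * P i := by
  simp only [mul_sub, mul_add, Finset.mul_sum, Finset.sum_sub_distrib, Finset.sum_add_distrib,
    ite_mul, one_mul, zero_mul, mul_ite, mul_zero, Finset.sum_ite_eq', Finset.mem_univ, if_true,
    sub_mul]
  have g1 : ∑ k, ∑ i, Rx k * (1/2 * T i k) = ∑ k, ∑ i, 1/2 * (Rx i * T k i) := by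
    rw [Finset.sum_comm]
    exact Finset.sum_congr rfl fun k _ => Finset.sum_congr rfl fun i _ => by ring
  have g2 : ∑ k, ∑ i, 1/2 * (D k * x k * (Rx i * H k i))
      = ∑ k, ∑ i, Rx k * (1/2 * (D i * (x i * H k i))) := by
    rw [Finset.sum_comm]
    exact Finset.sum_congr rfl fun k _ => Finset.sum_congr rfl fun i _ => by
      rw [hH k i]; ring
  have g3 : ∑ k, ∑ i, 1/2 * (2 * (R i k * H k i)) = ∑ j, ∑ k, R j k * H j k := by
    rw [Finset.sum_comm]
    exact Finset.sum_congr rfl fun k _ => Finset.sum_congr rfl fun i _ => by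
      rw [hH i k]; ring
  have g4 : ∑ k, ∑ i, 1/2 * (D k * x k * (R i k * P i))
      = ∑ i, 1/2 * ((∑ j, R i j * D j * x j) * P i) := by
    rw [Finset.sum_comm]
    refine Finset.sum_congr rfl fun i _ => ?_
    rw [Finset.sum_mul, Finset.mul_sum]
    exact Finset.sum_congr rfl fun j _ => by ring
  have g5 : ∑ k, Rx k * (1/2 * (D k * P k)) = ∑ i, 1/2 * (D i * Rx i * P i) :=
    Finset.sum_congr rfl fun k _ => by ring
  linear_combination g1 + g2 - g3 + g4 - g5


/-- Let `R` be any real `d×d` matrix and `D = diag(d₁,…,d_d)` a real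
diagonal matrix. For every smooth `φ` and every `x ∈ ℝ^d`:
`ℛ(L⁰φ)(x) - L⁰(ℛφ)(x) = -∑_{j,k} R_{jk} ∂_j∂_k φ(x) + (1/2)⟨(RD - DR)x, ∇φ(x)⟩`. -/
theorem commutator_identity (d : ℕ) (hd : 1 ≤ d)
    (R : Matrix (Fin d) (Fin d) ℝ) (D : Fin d → ℝ)
    (φ : (Fin d → ℝ) → ℝ) (hφ : ContDiff ℝ (⊤ : ℕ∞) φ) (x : Fin d → ℝ) :
    Rop R (Lsym D φ) x - Lsym D (Rop R φ) x =
      -(∑ j, ∑ k, R j k * pd j (pd k φ) x) +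
        (1 / 2) * ∑ i,
          (R * Matrix.diagonal D - Matrix.diagonal D * R).mulVec x i * pd i φ x := by
  have hH : ∀ k j, pd k (pd j φ) x = pd j (pd k φ) x := fun k j => congrFun (pd_comm hφ k j) x
  have e1 : Rop R (Lsym D φ) x = ∑ k, R.mulVec x k *
      ((1/2) * (∑ j, pd j (pd j (pd k φ)) x)
        - (1/2) * ∑ j, D j * ((if j = k then (1:ℝ) else 0) * pd j φ x + x j * pd k (pd j φ) x)) := by
    unfold Rop
    exact Finset.sum_congr rfl fun k _ => by rw [pd_Lsym hφ]
  have e2 : Lsym D (Rop R φ) x = (1/2) * (∑ k, ∑ j,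
        (2 * (R j k * pd k (pd j φ) x) + R.mulVec x j * pd k (pd k (pd j φ)) x))
      - (1/2) * ∑ k, D k * x k *
        (∑ j, (R j k * pd j φ x + R.mulVec x j * pd k (pd j φ) x)) := by
    unfold Lsym lap
    congr 1
    · congr 1
      exact Finset.sum_congr rfl fun k _ => pd2_Rop hφ R k x
    · congr 1
      exact Finset.sum_congr rfl fun k _ => by rw [pd_Rop hφ, mul_assoc]
  have e3 : ∀ i, (R * Matrix.diagonal D - Matrix.diagonal D * R).mulVec x i
      = (∑ j, R i j * D j * x j) - D i * R.mulVec x i := by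
    intro i
    have hA : (R * Matrix.diagonal D).mulVec x i = ∑ j, R i j * D j * x j := by
      simp [Matrix.mulVec, dotProduct, Matrix.mul_diagonal]
    have hB : (Matrix.diagonal D * R).mulVec x i = D i * R.mulVec x i := by
      simp [Matrix.mulVec, dotProduct, Matrix.diagonal_mul, Finset.mul_sum, mul_assoc]
    rw [Matrix.sub_mulVec]
    simp [hA, hB]
  rw [e1, e2, key R D x (fun j => pd j φ x) (R.mulVec x)
    (fun k j => pd k (pd j φ) x) (fun k j => pd k (pd k (pd j φ)) x) hH]
  congr 1
  congr 1
  exact Finset.sum_congr rfl fun i _ => by rw [e3 i]
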